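/- Let G : Mₙ → ℝ be continuously differentiable and orthogonally invariant, i.e. G(UAVᵀ) = G(A) for all A ∈ Mₙ and all orthogonal U, V ∈ Oₙ. For A ∈ Mₙ let ∇G(A) ∈ Mₙ denote the gradient matrix whose (i,j) entry is the directional derivative of G at A along the matrix unit E_{ij}. Then the commutator identity [∇G(A), A] = 0 holds for every A ∈ Mₙ, i.e. ∇G(A) Aᵀ = A (∇G(A))ᵀ. -/

import Mathlib

set_option maxHeartbeats 1000000


open Matrix

attribute [local instance] Matrix.frobeniusNormedAddCommGroup Matrix.frobeniusNormedSpace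

/-- The gradient matrix of `G : Mₙ → ℝ` at `A`: its `(i,j)` entry is the directional
derivative of `G` at `A` along the matrix unit `E_{ij}`. -/
noncomputable def gradMatrix {n : ℕ} (G : Matrix (Fin n) (Fin n) ℝ → ℝ)
    (A : Matrix (Fin n) (Fin n) ℝ) : Matrix (Fin n) (Fin n) ℝ :=
  Matrix.of fun i j => fderiv ℝ G A (Matrix.single i j 1)

lemma transpose_stdBasisMatrix' {n : ℕ} (i j : Fin n) :
    (Matrix.single i j (1:ℝ))ᵀ = Matrix.single j i 1 := by
  ext a b
  simp [Matrix.single, and_comm]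

lemma clm_apply_eq_sum {n : ℕ} (L : Matrix (Fin n) (Fin n) ℝ →L[ℝ] ℝ)
    (M : Matrix (Fin n) (Fin n) ℝ) :
    L M = ∑ i, ∑ j, M i j * L (Matrix.single i j 1) := by
  conv_lhs => rw [Matrix.matrix_eq_sum_single M]
  rw [map_sum]
  refine Finset.sum_congr rfl fun i _ => ?_
  rw [map_sum]
  refine Finset.sum_congr rfl fun j _ => ?_
  have : Matrix.single i j (M i j) = (M i j) • Matrix.single i j (1:ℝ) := by
    simp
  rw [this, L.map_smul, smul_eq_mul]

theorem stmt15 {n : ℕ} (G : Matrix (Fin n) (Fin n) ℝ → ℝ)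
    (hG : ContDiff ℝ 1 G)
    (hinv : ∀ (A U V : Matrix (Fin n) (Fin n) ℝ),
      U * Uᵀ = 1 → V * Vᵀ = 1 → G (U * A * Vᵀ) = G A)
    (A : Matrix (Fin n) (Fin n) ℝ) :
    gradMatrix G A * Aᵀ = A * (gradMatrix G A)ᵀ := by
  set L : Matrix (Fin n) (Fin n) ℝ →L[ℝ] ℝ := fderiv ℝ G A with hL
  -- Key claim: for k ≠ l, L (E_kl * A) = L (E_lk * A)
  have key : ∀ k l : Fin n, k ≠ l →
      L (Matrix.single k l 1 * A) = L (Matrix.single l k 1 * A) := by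
    intro k l hkl
    set P : Matrix (Fin n) (Fin n) ℝ :=
      Matrix.single k k 1 + Matrix.single l l 1 with hP
    set J : Matrix (Fin n) (Fin n) ℝ :=
      Matrix.single k l 1 - Matrix.single l k 1 with hJ
    -- the rotation curve
    set R : ℝ → Matrix (Fin n) (Fin n) ℝ :=
      fun t => 1 + (Real.cos t - 1) • P + Real.sin t • J with hR
    have hPP : P * P = P := by
      simp [hP, add_mul, mul_add, Matrix.single_mul_single_same,
        Matrix.single_mul_single_of_ne, hkl, hkl.symm]
    have hJJ : J * J = -P := by
      simp only [hJ, hP, sub_mul, mul_sub]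
      simp [Matrix.single_mul_single_same, Matrix.single_mul_single_of_ne, hkl, hkl.symm]
      all_goals abel
    have hPJ : P * J = J := by
      simp only [hJ, hP, add_mul, mul_sub]
      simp [Matrix.single_mul_single_same, Matrix.single_mul_single_of_ne, hkl, hkl.symm]
      all_goals abel
    have hJP : J * P = J := by
      simp only [hJ, hP, sub_mul, mul_add]
      simp [Matrix.single_mul_single_same, Matrix.single_mul_single_of_ne, hkl, hkl.symm]
      all_goals abel
    have hPT : Pᵀ = P := by
      simp [hP, Matrix.transpose_add, transpose_stdBasisMatrix', add_comm]
    have hJT : Jᵀ = -J := by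
      simp [hJ, Matrix.transpose_sub, transpose_stdBasisMatrix']
    -- R t is orthogonal
    have horth : ∀ t, R t * (R t)ᵀ = 1 := by
      intro t
      have hct : (R t)ᵀ = 1 + (Real.cos t - 1) • P - Real.sin t • J := by
        simp [hR, Matrix.transpose_add, Matrix.transpose_smul, hPT, hJT, sub_eq_add_neg]
      rw [hct]
      set a := Real.cos t - 1 with ha
      set s := Real.sin t with hs
      have expand : (1 + a • P + s • J) * (1 + a • P - s • J)
          = 1 + (2 * a + a * a + s * s) • P := by
        simp only [mul_add, mul_sub, add_mul, sub_mul, one_mul, mul_one,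
          Matrix.smul_mul, Matrix.mul_smul, hPP, hJJ, hPJ, hJP, smul_smul, smul_neg]
        module
      rw [hR]
      change (1 + a • P + s • J) * (1 + a • P - s • J) = 1; rw [expand]
      have : 2 * a + a * a + s * s = 0 := by
        have h1 : Real.cos t ^ 2 + Real.sin t ^ 2 = 1 := Real.cos_sq_add_sin_sq t
        rw [ha, hs]; nlinarith [h1]
      rw [this, zero_smul, add_zero]
    -- the curve c t = R t * A
    set c : ℝ → Matrix (Fin n) (Fin n) ℝ :=
      fun t => A + (Real.cos t - 1) • (P * A) + Real.sin t • (J * A) with hc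
    have hcR : ∀ t, c t = R t * A := by
      intro t
      simp [hc, hR, add_mul, Matrix.smul_mul]
    have hc0 : c 0 = A := by simp [hc]
    -- derivative of c at 0 is J * A
    have hcd : HasDerivAt c (J * A) 0 := by
      have h1 : HasDerivAt (fun t : ℝ => Real.cos t - 1) 0 0 := by
        simpa using (Real.hasDerivAt_cos 0).sub_const 1
      have h2 : HasDerivAt Real.sin 1 0 := by
        simpa using Real.hasDerivAt_sin 0
      have := ((hasDerivAt_const (0:ℝ) A).add (h1.smul_const (P * A))).add
        (h2.smul_const (J * A))
      rw [zero_smul, one_smul, zero_add, zero_add] at this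
      exact this
    -- G ∘ c is constant
    have hconst : (fun t => G (c t)) = fun _ => G A := by
      funext t
      rw [hcR]
      have := hinv A (R t) 1 (horth t) (by simp)
      simpa using this
    -- chain rule
    have hGd : HasFDerivAt G L A := (hG.differentiable one_ne_zero A).hasFDerivAt
    have hcomp : HasDerivAt (fun t => G (c t)) (L (J * A)) 0 := by
      have hGd' : HasFDerivAt G L (c 0) := by rw [hc0]; exact hGd
      exact hGd'.comp_hasDerivAt 0 hcd
    rw [hconst] at hcomp
    have hzero : L (J * A) = 0 := by
      have := hcomp.unique (hasDerivAt_const 0 (G A))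
      exact this
    have : L (Matrix.single k l 1 * A) - L (Matrix.single l k 1 * A) = 0 := by
      rw [← map_sub, ← Matrix.sub_mul]
      exact hzero
    linarith [this]
  -- compute entries
  have entry : ∀ k l : Fin n,
      L (Matrix.single k l 1 * A) = ∑ j, A l j * (gradMatrix G A) k j := by
    intro k l
    rw [clm_apply_eq_sum]
    rw [Finset.sum_comm]
    rw [show ∀ f : Fin n → Fin n → ℝ, (∑ j, ∑ i, f j i) = ∑ j, ∑ i, f j i from fun _ => rfl]
    refine Finset.sum_congr rfl fun j _ => ?_
    rw [Fintype.sum_eq_single k]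
    · rw [Matrix.single_mul_apply_same, one_mul]
      rfl
    · intro i hi
      rw [Matrix.single_mul_apply_of_ne 1 k l i j hi A, zero_mul]
  ext k l
  rcases eq_or_ne k l with rfl | hkl
  · simp only [Matrix.mul_apply, Matrix.transpose_apply]
    exact Finset.sum_congr rfl fun j _ => mul_comm _ _
  · have h := key k l hkl
    rw [entry, entry] at h
    simp only [Matrix.mul_apply, Matrix.transpose_apply]
    calc ∑ j, gradMatrix G A k j * A l j
        = ∑ j, A l j * gradMatrix G A k j := Finset.sum_congr rfl fun j _ => mul_comm _ _
      _ = ∑ j, A k j * gradMatrix G A l j := h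
      _ = ∑ j, A k j * gradMatrix G A l j := rfl
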